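/- With P, D, F̄, the power series roots φ_1, …, φ_D, and α_i := φ_i(0, 0) as in the setup, let k > deg_T P and for S ⊆ {1, …, D} let Q_S(T, x, z) := (∏_{i∈S} (z − φ_i(T, x))) trunc T^k. Then the set of monic-in-z polynomials in F[T, x, z] that divide P (equivalently, the set of monic-in-z factors of P over the base field F) is equal to the set { Q_U ∈ F̄[T, x, z] : U ⊆ {1, …, D}, Q_U divides P in F̄[T, x, z], and Q_U(0, x, z) = Q_U(0, 0, z) ∈ F[z] }. -/

import Mathlib

/-!
Lemma `identifying-conjugates-to-divisibility-testing-II`: the monic-in-`z`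
factors of `P` over the base field `F` are exactly the subproducts `Q_U` that
divide `P` over `F̄` and whose `T = 0` projection has coefficients in `F`.

`P ∈ F[T, x, z]` is represented as `Polynomial (Polynomial (MvPolynomial (Fin n) F))`,
with `z` the outer variable and `T` the inner one.  `F̄[x][[T]][z]` is
`Polynomial (PowerSeries (MvPolynomial (Fin n) (AlgebraicClosure F)))`.
-/

noncomputable section

/-- `F̄[x]`. -/
abbrev MvK (F : Type*) [Field F] (n : ℕ) := MvPolynomial (Fin n) (AlgebraicClosure F)

/-- Coefficient extension `F[T, x, z] → F̄[T, x, z]`. -/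
def liftTXZ (F : Type*) [Field F] (n : ℕ) :
    Polynomial (Polynomial (MvPolynomial (Fin n) F)) →+* Polynomial (Polynomial (MvK F n)) :=
  Polynomial.mapRingHom (Polynomial.mapRingHom
    (MvPolynomial.map (algebraMap F (AlgebraicClosure F))))

/-- Inclusion `F̄[T, x, z] = F̄[x][T][z] → F̄[x][[T]][z]`. -/
def liftPS (F : Type*) [Field F] (n : ℕ) :
    Polynomial (Polynomial (MvK F n)) →+* Polynomial (PowerSeries (MvK F n)) :=
  Polynomial.mapRingHom (Polynomial.coeToPowerSeries.ringHom)

/-- Coefficientwise truncation `trunc T^k : F̄[x][[T]][z] → F̄[x][T][z]`. -/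
def truncPow {A : Type*} [CommSemiring A] (k : ℕ) (q : Polynomial (PowerSeries A)) :
    Polynomial (Polynomial A) :=
  ∑ j ∈ q.support, Polynomial.monomial j (PowerSeries.trunc k (q.coeff j))

/-!
A monic factor `G₀` of `P` over `F` divides `∏ (z - φᵢ)` in the domain `F̄[x][[T]][z]`, so it
is a subproduct; its `T`-degree is at most that of `P`, so truncation at `T^k` does not change
it; and `G₀(0, x, z)` divides `p₀` in `F[x][z]`, hence has constant coefficients because `p₀`
splits over `F̄`.

Conversely, let `G ∣ P` over `F̄` with `G(0) = q ∈ F[z]`, and write `P = G H`. Since `p₀` is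
squarefree, `q` and `r = p₀ / q` are coprime. Comparing coefficients of `T^m` gives
`q Hₘ + r Gₘ = Pₘ - ∑_{0<i<m} Gᵢ H_{m-i}` with `deg_z Gₘ < deg q`, a Bézout system with a unique
solution; by induction on `m` that solution is defined over `F[x]`, so `G` is.
-/

open Polynomial
open scoped Polynomial.Bivariate

theorem Multiset.exists_le_map_eq_of_le_map {α β : Type*} {f : α → β} {s : Multiset α}
    {t : Multiset β} (h : t ≤ s.map f) : ∃ u ≤ s, u.map f = t := by
  classical
  induction s using Multiset.induction_on generalizing t with
  | empty => exact ⟨0, le_rfl, (Multiset.le_zero.mp h).symm⟩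
  | cons a s ih =>
    rw [Multiset.map_cons] at h
    by_cases ha : f a ∈ t
    · obtain ⟨u, hu, hfu⟩ := ih (Multiset.erase_le_iff_le_cons.mpr h)
      exact ⟨a ::ₘ u, Multiset.cons_le_cons a hu, by
        rw [Multiset.map_cons, hfu, Multiset.cons_erase ha]⟩
    · obtain ⟨u, hu, hfu⟩ := ih ((Multiset.le_cons_of_notMem ha).mp h)
      exact ⟨u, hu.trans (Multiset.le_cons_self s a), hfu⟩

theorem MvPolynomial.eq_C_of_map_eq_C {σ R S : Type*} [CommSemiring R] [CommSemiring S]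
    {f : R →+* S} (hf : Function.Injective f) {a : MvPolynomial σ R} {b : S}
    (h : MvPolynomial.map f a = MvPolynomial.C b) : a = MvPolynomial.C (MvPolynomial.coeff 0 a) :=
  MvPolynomial.map_injective f hf <| by
    rw [h, MvPolynomial.map_C, ← MvPolynomial.coeff_map, h, MvPolynomial.coeff_zero_C]

namespace Polynomial.Bivariate

variable {R : Type*} [CommSemiring R]

theorem coeff_coeff_swap (p : R[X][Y]) (i j : ℕ) :
    ((swap p).coeff i).coeff j = (p.coeff j).coeff i := by
  induction p using Polynomial.induction_on' with
  | add p q hp hq => simp only [map_add, coeff_add, hp, hq]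
  | monomial n a =>
    rw [swap_monomial, coeff_mul_C, coeff_map, coeff_C_mul_X_pow, coeff_monomial]
    by_cases h : n = j
    · simp [h]
    · simp [h, Ne.symm h]

theorem swap_coeff_zero (p : R[X][Y]) : (swap p).coeff 0 = p.map (evalRingHom 0) := by
  ext j : 1
  rw [coeff_coeff_swap, coeff_map, coe_evalRingHom, coeff_zero_eq_eval_zero]

theorem swap_map {S : Type*} [CommSemiring S] (f : R →+* S) (p : R[X][Y]) :
    swap (p.map (mapRingHom f)) = (swap p).map (mapRingHom f) := by
  ext i j : 2
  simp only [coeff_coeff_swap, coeff_map, coe_mapRingHom]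

theorem degree_swap_lt_iff {p : R[X][Y]} {k : ℕ} :
    (swap p).degree < k ↔ ∀ i, (p.coeff i).degree < k := by
  simp only [degree_lt_iff_coeff_zero, Polynomial.ext_iff, coeff_coeff_swap, coeff_zero]
  exact ⟨fun h i m hm => h m hm i, fun h m hm i => h i m hm⟩

theorem degree_coeff_swap_lt_of_monic {p : R[X][Y]} (hp : p.Monic) {m : ℕ} (hm : 0 < m) :
    ((swap p).coeff m).degree < p.natDegree := by
  rw [degree_lt_iff_coeff_zero]
  intro N hN
  rw [coeff_coeff_swap]
  rcases hN.eq_or_lt with rfl | hlt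
  · rw [hp.coeff_natDegree, coeff_one, if_neg hm.ne']
  · rw [coeff_eq_zero_of_natDegree_lt hlt, coeff_zero]

theorem degree_coeff_lt_of_dvd {A : Type*} [CommRing A] [IsDomain A] {G P : A[X][Y]}
    (h : G ∣ P) (hP : P ≠ 0) {k : ℕ} (hk : ∀ i, (P.coeff i).degree < k) (i : ℕ) :
    (G.coeff i).degree < k := by
  have hswap : (swap G).degree ≤ (swap P).degree :=
    degree_le_of_dvd (_root_.map_dvd swap h) ((map_ne_zero_iff _ swap.injective).mpr hP)
  exact degree_swap_lt_iff.mp (hswap.trans_lt (degree_swap_lt_iff.mpr hk)) i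

end Polynomial.Bivariate

namespace Polynomial

theorem exists_subset_eq_prod_X_sub_C_of_monic_dvd {R ι : Type*} [CommRing R] [IsDomain R]
    {s : Finset ι} {f : ι → R} {g : R[X]} (hg : g.Monic) (h : g ∣ ∏ i ∈ s, (X - C (f i))) :
    ∃ u ⊆ s, g = ∏ i ∈ u, (X - C (f i)) := by
  have hprod : ∏ i ∈ s, (X - C (f i)) = ((s.val.map f).map (X - C ·)).prod := by
    rw [Finset.prod_eq_multiset_prod, Multiset.map_map]; rfl
  have hne : ∏ i ∈ s, (X - C (f i)) ≠ 0 :=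
    (monic_prod_of_monic _ _ fun i _ => monic_X_sub_C (f i)).ne_zero
  have hsplit : g.Splits := (Splits.prod fun i _ => Splits.X_sub_C (f i)).of_dvd hne h
  have hroots : g.roots ≤ s.val.map f := by
    simpa only [hprod, roots_multiset_prod_X_sub_C] using roots.le_of_dvd hne h
  obtain ⟨u, hus, hu⟩ := Multiset.exists_le_map_eq_of_le_map hroots
  refine ⟨⟨u, Multiset.nodup_of_le hus s.nodup⟩, Finset.val_le_iff.mp hus, ?_⟩
  rw [hsplit.eq_prod_roots_of_monic hg, ← hu, Multiset.map_map]
  rfl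

theorem exists_map_C_eq_of_monic_dvd {K σ : Type*} [Field K] {g : (MvPolynomial σ K)[X]}
    (hg : g.Monic) {p : K[X]} (hp : p ≠ 0) (h : g ∣ p.map MvPolynomial.C) :
    ∃ q : K[X], q.map MvPolynomial.C = g := by
  let ι : MvPolynomial σ K →+* MvPolynomial σ (AlgebraicClosure K) :=
    MvPolynomial.map (algebraMap K _)
  set p' := (p.map (algebraMap K (AlgebraicClosure K))).map (MvPolynomial.C (σ := σ))
  have hne : p' ≠ 0 :=
    (Polynomial.map_ne_zero_iff (MvPolynomial.C_injective _ _)).mpr (map_ne_zero hp)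
  have hdvd : g.map ι ∣ p' := by
    simpa only [p', map_map, ι, MvPolynomial.map_comp_C] using Polynomial.map_dvd ι h
  have hsplit : p'.Splits := (IsAlgClosed.splits _).map _
  obtain ⟨g', hg'⟩ := (mem_lifts _).mp <|
    (hsplit.of_dvd hne hdvd).mem_lift_of_roots_mem_range (hg.map ι) MvPolynomial.C fun a ha => by
      have ha' := Multiset.mem_of_le (roots.le_of_dvd hne hdvd) ha
      rw [(IsAlgClosed.splits _).roots_map] at ha'
      obtain ⟨b, -, rfl⟩ := Multiset.mem_map.mp ha'
      exact ⟨b, rfl⟩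
  refine ⟨g.map MvPolynomial.constantCoeff, ext fun j => ?_⟩
  have hj : ι (g.coeff j) = MvPolynomial.C (g'.coeff j) := by
    simpa only [coeff_map] using (congrArg (coeff · j) hg').symm
  rw [coeff_map, coeff_map, MvPolynomial.constantCoeff_eq,
    ← MvPolynomial.eq_C_of_map_eq_C (algebraMap K _).injective hj]

theorem map_mapRingHom_map_evalRingHom_zero {A B : Type*} [CommSemiring A] [CommSemiring B]
    (f : A →+* B) (Q : A[X][Y]) :
    (Q.map (mapRingHom f)).map (evalRingHom 0) = (Q.map (evalRingHom 0)).map f := by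
  ext j : 1
  simp only [coeff_map, coe_evalRingHom, coe_mapRingHom, eval_zero_map]

section Bezout

variable {R S : Type*} [CommRing R] [CommRing S]

theorem eq_zero_of_mul_add_mul_eq_zero {q r x y : S[X]} (hq : q.Monic) (hqr : IsCoprime q r)
    (hx : x.degree < q.degree) (h : q * y + r * x = 0) : x = 0 ∧ y = 0 := by
  nontriviality S
  have hqx : q ∣ x := hqr.dvd_of_dvd_mul_left ⟨-y, by linear_combination h⟩
  have hx0 : x = 0 := by
    rwa [← modByMonic_eq_zero_iff_dvd hq, (modByMonic_eq_self_iff hq).mpr hx] at hqx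
  refine ⟨hx0, hq.mul_right_eq_zero_iff.mp ?_⟩
  simpa [hx0] using h

theorem mem_lifts_of_mul_add_mul_mem_lifts [Nontrivial S] (ν : R →+* S) {q r : R[X]}
    (hq : q.Monic) (hqr : IsCoprime q r) {x y : S[X]} (hx : x.degree < q.degree)
    (hxy : q.map ν * y + r.map ν * x ∈ lifts ν) : x ∈ lifts ν ∧ y ∈ lifts ν := by
  have := ν.domain_nontrivial
  obtain ⟨W, hW⟩ := hxy
  obtain ⟨a, b, hab⟩ := id hqr
  -- the Bézout solution of `q y₀ + r x₀ = W` over `R`, reduced so that `deg x₀ < deg q`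
  set x₀ := (b * W) %ₘ q
  set y₀ := a * W + r * ((b * W) /ₘ q)
  have hW₀ : q * y₀ + r * x₀ = W := by
    linear_combination r * modByMonic_add_div (b * W) q + W * hab
  have hx₀ : (x₀.map ν).degree < q.degree :=
    (degree_map_le).trans_lt (degree_modByMonic_lt _ hq)
  obtain ⟨hx, hy⟩ := eq_zero_of_mul_add_mul_eq_zero (hq.map ν) (hqr.map (mapRingHom ν))
    (x := x - x₀.map ν) (y := y - y₀.map ν)
    (by rw [hq.degree_map]; exact (degree_sub_le _ _).trans_lt (max_lt hx hx₀))
    (by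
      have := congrArg (map ν) hW₀
      simp only [Polynomial.map_add, Polynomial.map_mul, coe_mapRingHom] at this hW ⊢
      linear_combination hW.symm - this)
  exact ⟨⟨x₀, (sub_eq_zero.mp hx).symm⟩, ⟨y₀, (sub_eq_zero.mp hy).symm⟩⟩

variable [Nontrivial S]

theorem mem_lifts_of_map_eq_mul_of_coeff_zero (ν : R →+* S) {P : R[X][Y]} {G H : S[X][Y]}
    (h : P.map (mapRingHom ν) = G * H) {q r : R[X]} (hq : q.Monic) (hqr : IsCoprime q r)
    (hG₀ : G.coeff 0 = q.map ν) (hH₀ : H.coeff 0 = r.map ν)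
    (hG : ∀ m, 0 < m → (G.coeff m).degree < q.degree) :
    G ∈ lifts (mapRingHom ν) ∧ H ∈ lifts (mapRingHom ν) := by
  suffices hcoeff : ∀ m, G.coeff m ∈ liftsRing ν ∧ H.coeff m ∈ liftsRing ν by
    simp only [lifts_iff_coeff_lifts]
    exact ⟨fun m => (hcoeff m).1, fun m => (hcoeff m).2⟩
  intro m
  induction m using Nat.strong_induction_on with
  | _ m ih =>
  rcases m with _ | m
  · rw [hG₀, hH₀]
    exact ⟨⟨q, rfl⟩, ⟨r, rfl⟩⟩
  have hmid : ∑ k ∈ Finset.range m, G.coeff (k + 1) * H.coeff (m - k) ∈ liftsRing ν :=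
    Subring.sum_mem _ fun k hk => Subring.mul_mem _
      (ih (k + 1) (by rw [Finset.mem_range] at hk; omega)).1 (ih (m - k) (by omega)).2
  have hP : (P.coeff (m + 1)).map ν = q.map ν * H.coeff (m + 1) + r.map ν * G.coeff (m + 1) +
      ∑ k ∈ Finset.range m, G.coeff (k + 1) * H.coeff (m - k) := by
    rw [← coe_mapRingHom, ← coeff_map, h, coeff_mul,
      Finset.Nat.sum_antidiagonal_eq_sum_range_succ_mk, Finset.sum_range_succ',
      Finset.sum_range_succ]
    simp only [Nat.add_sub_add_right, Nat.sub_self, Nat.sub_zero, hG₀, hH₀, coe_mapRingHom]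
    ring
  rw [← lifts_iff_liftsRing, ← lifts_iff_liftsRing]
  refine mem_lifts_of_mul_add_mul_mem_lifts ν hq hqr (hG _ m.succ_pos) ?_
  rw [lifts_iff_liftsRing, eq_sub_of_add_eq hP.symm]
  exact sub_mem ⟨P.coeff (m + 1), rfl⟩ hmid

open Bivariate in
theorem mem_lifts_of_map_eq_mul (ν : R →+* S) {P : R[X][Y]} {G H : S[X][Y]} (hG : G.Monic)
    (h : P.map (mapRingHom ν) = G * H) {q r : R[X]} (hq : q.Monic) (hqr : IsCoprime q r)
    (hG₀ : G.map (evalRingHom 0) = q.map ν) (hH₀ : H.map (evalRingHom 0) = r.map ν) :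
    G ∈ lifts (mapRingHom ν) ∧ H ∈ lifts (mapRingHom ν) := by
  have hdeg : q.degree = G.natDegree := by
    rw [← hq.degree_map ν, ← hG₀, degree_eq_natDegree (hG.map _).ne_zero, hG.natDegree_map]
  obtain ⟨⟨G', hG'⟩, ⟨H', hH'⟩⟩ := mem_lifts_of_map_eq_mul_of_coeff_zero ν
    (by rw [← swap_map, h, map_mul]) hq hqr
    (by rw [swap_coeff_zero, hG₀]) (by rw [swap_coeff_zero, hH₀])
    (fun m hm => hdeg ▸ degree_coeff_swap_lt_of_monic hG hm) (P := swap P)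
  rw [coe_mapRingHom] at hG' hH'
  refine ⟨⟨swap G', ?_⟩, ⟨swap H', ?_⟩⟩
  · rw [coe_mapRingHom, ← swap_map, hG', swap_swap_apply]
  · rw [coe_mapRingHom, ← swap_map, hH', swap_swap_apply]

end Bezout

end Polynomial

theorem truncPow_coeff {A : Type*} [CommSemiring A] (k : ℕ) (q : (PowerSeries A)[X]) (j : ℕ) :
    (truncPow k q).coeff j = PowerSeries.trunc k (q.coeff j) := by
  simp +contextual [truncPow, finsetSum_coeff, coeff_monomial]

theorem truncPow_map_coe {A : Type*} [CommSemiring A] {k : ℕ} {Q : A[X][Y]}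
    (hQ : ∀ j, (Q.coeff j).degree < k) : truncPow k (Q.map coeToPowerSeries.ringHom) = Q := by
  ext j : 1
  rw [truncPow_coeff, coeff_map, coeToPowerSeries.ringHom_apply]
  rcases eq_or_ne (Q.coeff j) 0 with h0 | h0
  · rw [h0, coe_zero, map_zero]
  · exact PowerSeries.trunc_coe_eq_self ((natDegree_lt_iff_degree_lt h0).mpr (hQ j))

theorem Polynomial.Monic.truncPow {A : Type*} [CommSemiring A] {k : ℕ} (hk : 0 < k)
    {Q : (PowerSeries A)[X]} (hQ : Q.Monic) : (truncPow k Q).Monic := by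
  obtain ⟨k, rfl⟩ := Nat.exists_eq_add_of_lt hk
  apply monic_of_natDegree_le_of_coeff_eq_one Q.natDegree
  · rw [natDegree_le_iff_coeff_eq_zero]
    intro N hN
    rw [truncPow_coeff, coeff_eq_zero_of_natDegree_lt hN, map_zero]
  · rw [truncPow_coeff, hQ.coeff_natDegree, PowerSeries.trunc_one]

section Lift

variable {F : Type*} [Field F] {n : ℕ}

theorem map_algebraMap_algebraicClosure_injective :
    Function.Injective (MvPolynomial.map (σ := Fin n) (algebraMap F (AlgebraicClosure F))) :=
  MvPolynomial.map_injective _ (algebraMap F _).injective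

theorem liftTXZ_injective : Function.Injective (liftTXZ F n) :=
  map_injective _ (map_injective _ map_algebraMap_algebraicClosure_injective)

theorem Polynomial.Monic.of_liftTXZ {Q : (MvPolynomial (Fin n) F)[X][Y]}
    (h : (liftTXZ F n Q).Monic) : Q.Monic :=
  monic_of_injective (f := mapRingHom (MvPolynomial.map (algebraMap F (AlgebraicClosure F))))
    (map_injective _ map_algebraMap_algebraicClosure_injective) h

theorem degree_coeff_liftTXZ (Q : (MvPolynomial (Fin n) F)[X][Y]) (i : ℕ) :
    ((liftTXZ F n Q).coeff i).degree = (Q.coeff i).degree := by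
  rw [liftTXZ, coe_mapRingHom, coeff_map, coe_mapRingHom,
    degree_map_eq_of_injective map_algebraMap_algebraicClosure_injective]

theorem liftTXZ_map_evalRingHom_zero {Q : (MvPolynomial (Fin n) F)[X][Y]} {q : F[X]}
    (h : Q.map (evalRingHom 0) = q.map MvPolynomial.C) :
    (liftTXZ F n Q).map (evalRingHom 0) =
      q.map ((MvPolynomial.C : AlgebraicClosure F →+* MvK F n).comp (algebraMap F _)) := by
  rw [liftTXZ, coe_mapRingHom, map_mapRingHom_map_evalRingHom_zero, h, map_map,
    MvPolynomial.map_comp_C]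

theorem monic_of_liftPS_eq_prod {P : (MvPolynomial (Fin n) F)[X][Y]} {D : ℕ}
    {φ : Fin D → PowerSeries (MvK F n)}
    (h : liftPS F n (liftTXZ F n P) = ∏ i, (X - C (φ i))) : P.Monic := by
  refine .of_liftTXZ (monic_of_injective (f := coeToPowerSeries.ringHom) (coe_injective _) ?_)
  change (liftPS F n (liftTXZ F n P)).Monic
  exact h ▸ monic_prod_of_monic _ _ fun i _ => monic_X_sub_C (φ i)

theorem exists_liftTXZ_eq_truncPow_prod {P G₀ : (MvPolynomial (Fin n) F)[X][Y]} (hP : P ≠ 0)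
    {D : ℕ} {φ : Fin D → PowerSeries (MvK F n)}
    (hfact : liftPS F n (liftTXZ F n P) = ∏ i, (X - C (φ i)))
    {k : ℕ} (hk : ∀ i, (P.coeff i).degree < k) (hG₀ : G₀.Monic) (hdvd : G₀ ∣ P) :
    ∃ U : Finset (Fin D),
      liftTXZ F n G₀ = truncPow (A := MvK F n) k (∏ i ∈ U, (X - C (φ i))) := by
  have hdvd' := _root_.map_dvd (liftTXZ F n) hdvd
  have hdvdPS := _root_.map_dvd (liftPS F n) hdvd'
  rw [hfact] at hdvdPS
  obtain ⟨U, -, hU⟩ :=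
    exists_subset_eq_prod_X_sub_C_of_monic_dvd ((hG₀.map _).map coeToPowerSeries.ringHom) hdvdPS
  have hdeg : ∀ i, ((liftTXZ F n G₀).coeff i).degree < k :=
    Bivariate.degree_coeff_lt_of_dvd hdvd' ((map_ne_zero_iff _ liftTXZ_injective).mpr hP)
      fun i => degree_coeff_liftTXZ P i ▸ hk i
  exact ⟨U, hU ▸ (truncPow_map_coe hdeg).symm⟩

theorem exists_monic_dvd_of_dvd_liftTXZ {P : (MvPolynomial (Fin n) F)[X][Y]} {p₀ : F[X]}
    (hreg : P.map (evalRingHom 0) = p₀.map MvPolynomial.C) (hp₀ : Squarefree p₀)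
    {G : (MvK F n)[X][Y]} (hG : G.Monic) (hdvd : G ∣ liftTXZ F n P) {q : F[X]}
    (hq : G.map (evalRingHom 0) =
      q.map ((MvPolynomial.C : AlgebraicClosure F →+* MvK F n).comp (algebraMap F _))) :
    ∃ G₀ : (MvPolynomial (Fin n) F)[X][Y], G₀.Monic ∧ G₀ ∣ P ∧ liftTXZ F n G₀ = G := by
  set ι₀ := (MvPolynomial.C : AlgebraicClosure F →+* MvK F n).comp (algebraMap F _)
  have hι₀ : Function.Injective ι₀ :=
    (MvPolynomial.C_injective _ _).comp (algebraMap F _).injective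
  obtain ⟨H, hPGH⟩ := hdvd
  have hP₀ := liftTXZ_map_evalRingHom_zero hreg
  have hqm : q.Monic := monic_of_injective hι₀ (hq ▸ hG.map _)
  obtain ⟨r, rfl⟩ : q ∣ p₀ := (map_dvd_map ι₀ hι₀ hqm).mp
    ⟨H.map (evalRingHom 0), by rw [← hq, ← Polynomial.map_mul, ← hPGH, hP₀]⟩
  have hH : H.map (evalRingHom 0) = r.map ι₀ := mul_left_cancel₀ (hqm.map ι₀).ne_zero <| by
    rw [← hq, ← Polynomial.map_mul, ← hPGH, hP₀, Polynomial.map_mul, hq]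
  have hqr : IsCoprime q r := (squarefree_mul_iff.mp hp₀).1.isCoprime
  have hι : (MvPolynomial.map (algebraMap F (AlgebraicClosure F))).comp MvPolynomial.C = ι₀ :=
    MvPolynomial.map_comp_C _
  obtain ⟨⟨G₀, rfl⟩, ⟨H₀, rfl⟩⟩ := mem_lifts_of_map_eq_mul _ hG hPGH (hqm.map MvPolynomial.C)
    (hqr.map (mapRingHom MvPolynomial.C)) (by rw [hq, map_map, hι])
    (by rw [hH, coe_mapRingHom, map_map, hι])
  exact ⟨G₀, hG.of_liftTXZ, ⟨H₀, liftTXZ_injective (by rw [map_mul]; exact hPGH)⟩, rfl⟩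

end Lift

theorem stmt_8_general {F : Type*} [Field F] {n : ℕ}
    (P : Polynomial (Polynomial (MvPolynomial (Fin n) F)))
    -- `P(0, x, z) = P(0, 0, z) ∈ F[z]` (this is `T`-regularity) and it is squarefree:
    (p₀ : Polynomial F)
    (hreg : P.map (Polynomial.evalRingHom (0 : MvPolynomial (Fin n) F)) =
      p₀.map (MvPolynomial.C : F →+* MvPolynomial (Fin n) F))
    (hp₀sqf : Squarefree p₀)
    -- `P = ∏ (z − φ_i)` in `F̄[x][[T]][z]`, with `D = deg_z P`:
    (D : ℕ)
    (φ : Fin D → PowerSeries (MvK F n))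
    (hfact : liftPS F n (liftTXZ F n P) =
      ∏ i : Fin D, (Polynomial.X - Polynomial.C (φ i)))
    -- `k > deg_T P`:
    (k : ℕ) (hk : ∀ i : ℕ, (P.coeff i).degree < (k : ℕ)) :
    -- the set of monic-in-`z` factors of `P` over `F`, viewed inside `F̄[T, x, z]`,
    -- equals the set of subproducts `Q_U` dividing `P` whose `T = 0` projection
    -- is a univariate with coefficients in `F`:
    {G : Polynomial (Polynomial (MvK F n)) |
        ∃ G₀ : Polynomial (Polynomial (MvPolynomial (Fin n) F)),
          G₀.Monic ∧ G₀ ∣ P ∧ liftTXZ F n G₀ = G} =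
    {G : Polynomial (Polynomial (MvK F n)) |
        ∃ U : Finset (Fin D),
          G = truncPow (A := MvK F n) k (∏ i ∈ U, (Polynomial.X - Polynomial.C (φ i))) ∧
          G ∣ liftTXZ F n P ∧
          ∃ q : Polynomial F,
            G.map (Polynomial.evalRingHom (0 : MvK F n)) =
              q.map ((MvPolynomial.C : AlgebraicClosure F →+* MvK F n).comp
                (algebraMap F (AlgebraicClosure F)))} := by
  have hP : P.Monic := monic_of_liftPS_eq_prod hfact
  have hk₀ : 0 < k := by simpa [hP.coeff_natDegree] using hk P.natDegree
  have hp₀ : p₀ ≠ 0 :=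
    (monic_of_injective (MvPolynomial.C_injective _ _) (hreg ▸ hP.map _)).ne_zero
  ext G
  constructor
  · rintro ⟨G₀, hG₀, hG₀P, rfl⟩
    obtain ⟨U, hU⟩ := exists_liftTXZ_eq_truncPow_prod hP.ne_zero hfact hk hG₀ hG₀P
    obtain ⟨q, hq⟩ :=
      exists_map_C_eq_of_monic_dvd (hG₀.map _) hp₀ (hreg ▸ Polynomial.map_dvd _ hG₀P)
    exact ⟨U, hU, _root_.map_dvd _ hG₀P, q, liftTXZ_map_evalRingHom_zero hq.symm⟩
  · rintro ⟨U, rfl, hdvd, q, hq⟩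
    exact exists_monic_dvd_of_dvd_liftTXZ hreg hp₀sqf
      ((monic_prod_of_monic _ _ fun i _ => monic_X_sub_C (φ i)).truncPow hk₀) hdvd hq

theorem stmt_8 {F : Type*} [Field F] {n : ℕ}
    (P : Polynomial (Polynomial (MvPolynomial (Fin n) F)))
    (hP0 : P ≠ 0) (hsqf : Squarefree P)
    -- `P` is monic in `z`:
    (hmonic : ∃ c : F, c ≠ 0 ∧ P.leadingCoeff = Polynomial.C (MvPolynomial.C c))
    -- `P(0, x, z) = P(0, 0, z) ∈ F[z]` (this is `T`-regularity) and it is squarefree: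
    (p₀ : Polynomial F)
    (hreg : P.map (Polynomial.evalRingHom (0 : MvPolynomial (Fin n) F)) =
      p₀.map (MvPolynomial.C : F →+* MvPolynomial (Fin n) F))
    (hp₀sqf : Squarefree p₀)
    -- `P = ∏ (z − φ_i)` in `F̄[x][[T]][z]`, with `D = deg_z P`:
    (D : ℕ) (hD : D = P.natDegree)
    (φ : Fin D → PowerSeries (MvK F n))
    (hfact : liftPS F n (liftTXZ F n P) =
      ∏ i : Fin D, (Polynomial.X - Polynomial.C (φ i)))
    -- `k > deg_T P`:
    (k : ℕ) (hk : ∀ i : ℕ, (P.coeff i).degree < (k : ℕ)) :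
    -- the set of monic-in-`z` factors of `P` over `F`, viewed inside `F̄[T, x, z]`,
    -- equals the set of subproducts `Q_U` dividing `P` whose `T = 0` projection
    -- is a univariate with coefficients in `F`:
    {G : Polynomial (Polynomial (MvK F n)) |
        ∃ G₀ : Polynomial (Polynomial (MvPolynomial (Fin n) F)),
          G₀.Monic ∧ G₀ ∣ P ∧ liftTXZ F n G₀ = G} =
    {G : Polynomial (Polynomial (MvK F n)) |
        ∃ U : Finset (Fin D),
          G = truncPow (A := MvK F n) k (∏ i ∈ U, (Polynomial.X - Polynomial.C (φ i))) ∧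
          G ∣ liftTXZ F n P ∧
          ∃ q : Polynomial F,
            G.map (Polynomial.evalRingHom (0 : MvK F n)) =
              q.map ((MvPolynomial.C : AlgebraicClosure F →+* MvK F n).comp
                (algebraMap F (AlgebraicClosure F)))} :=
  stmt_8_general P p₀ hreg hp₀sqf D φ hfact k hk
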